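/- Let m > 0, s ∈ ℤ, and let π, ρ be partitions of the same size. Then π and ρ have the same m-core if and only if 1 − t^{−m} divides Z(t, β_{π,s}) − Z(t, β_{ρ,s}) in ℤ[[t^{−1}]][t]. -/

import Mathlib

/-- Integer partitions, as weakly decreasing eventually-zero sequences `ℕ → ℕ`. -/
def PartitionSeq : Type :=
  {f : ℕ → ℕ // (∀ i j : ℕ, i ≤ j → f j ≤ f i) ∧ ∃ N : ℕ, ∀ i : ℕ, N ≤ i → f i = 0}

/-- The beta-set `β_{π,s} = {π_i − i + s : i ≥ 1}`. -/
def betaSet (π : PartitionSeq) (s : ℤ) : Set ℤ :=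
  Set.range fun i : ℕ => (π.1 i : ℤ) - ((i : ℤ) + 1) + s

/-- The `j`-th runner `υ_m^{(j)}(β) = {q_m(x) : x ∈ β, r_m(x) = j}`. -/
def abacusRunner (m : ℕ) (j : Fin m) (β : Set ℤ) : Set ℤ :=
  {q : ℤ | ∃ x ∈ β, x % (m : ℤ) = (j : ℤ) ∧ x / (m : ℤ) = q}

/-- The size `|π|` of a partition. -/
noncomputable def psize (π : PartitionSeq) : ℕ := ∑ᶠ i : ℕ, π.1 i


namespace Stmt12Aux
open Classical

/-- coefficientwise difference of indicator functions -/
noncomputable def fd (P Q : Set ℤ) (k : ℤ) : ℤ :=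
  (if k ∈ P then 1 else 0) - (if k ∈ Q then 1 else 0)

/-- sum of `fd` over the residue class `j` within the window `(L, U]` -/
noncomputable def Ss (m : ℕ) (P Q : Set ℤ) (L U j : ℤ) : ℤ :=
  ∑ x ∈ (Finset.Icc (L+1) U).filter (fun x => x % (m:ℤ) = j), fd P Q x

lemma mul_self_le {m : ℕ} (hm : 0 < m) {q : ℤ} (hq : q ≤ 0) : (m:ℤ) * q ≤ q := by
  nlinarith [Int.toNat_of_nonneg (by omega : (0:ℤ) ≤ (m:ℤ) - 1)]

lemma le_mul_self {m : ℕ} (hm : 0 < m) {q : ℤ} (hq : 0 ≤ q) : q ≤ (m:ℤ) * q := by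
  nlinarith

lemma sum_window (m : ℕ) (hm : 0 < m) (P Q : Set ℤ) (L U : ℤ)
    (hf0 : ∀ k : ℤ, (k ≤ L ∨ U < k) → fd P Q k = 0)
    (j a : ℤ) (n : ℕ) (hja : a % m = j) (haL : a ≤ L) (hU : U < a + n * m) :
    ∑ i ∈ Finset.range n, fd P Q (a + i * m) = Ss m P Q L U j := by
  have key : ∀ x : ℤ, x % (m:ℤ) = j → L + 1 ≤ x →
      ∃ hd : 0 ≤ (x - a)/m, a + (((x - a)/m).toNat : ℤ) * m = x := by
    intro x hxm hx1
    have hdvd : (m:ℤ) ∣ (x - a) := by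
      have : (x - a) % m = 0 := by
        rw [Int.sub_emod, hxm, hja, sub_self, Int.zero_emod]
      exact Int.dvd_of_emod_eq_zero this
    have hxa : 0 ≤ x - a := by omega
    have hc : (x - a) / m * m = x - a := Int.ediv_mul_cancel hdvd
    have hnn : 0 ≤ (x - a) / m := Int.ediv_nonneg hxa (by positivity)
    refine ⟨hnn, ?_⟩
    rw [Int.toNat_of_nonneg hnn]
    omega
  rw [Ss]
  have e1 : ∑ i ∈ Finset.range n, fd P Q (a + (i:ℤ) * m)
      = ∑ i ∈ (Finset.range n).filter (fun i : ℕ => fd P Q (a + (i:ℤ) * m) ≠ 0), fd P Q (a + (i:ℤ) * m) :=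
    (Finset.sum_filter_ne_zero _).symm
  have e2 : ∑ x ∈ (Finset.Icc (L+1) U).filter (fun x => x % (m:ℤ) = j), fd P Q x
      = ∑ x ∈ ((Finset.Icc (L+1) U).filter (fun x : ℤ => x % (m:ℤ) = j)).filter (fun x : ℤ => fd P Q x ≠ 0), fd P Q x :=
    (Finset.sum_filter_ne_zero _).symm
  rw [e1, e2, Finset.filter_filter]
  refine Finset.sum_nbij' (fun i => a + (i:ℤ) * m) (fun x => ((x - a) / m).toNat) ?_ ?_ ?_ ?_ ?_
  · intro i hi
    simp only [Finset.mem_filter, Finset.mem_range] at hi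
    simp only [Finset.mem_filter, Finset.mem_Icc]
    refine ⟨⟨?_, ?_⟩, ?_, hi.2⟩
    · by_contra h
      exact hi.2 (hf0 _ (Or.inl (by omega)))
    · by_contra h
      exact hi.2 (hf0 _ (Or.inr (by omega)))
    · rw [Int.add_mul_emod_self_right, hja]
  · intro x hx
    simp only [Finset.mem_filter, Finset.mem_Icc] at hx
    obtain ⟨⟨hx1, hx2⟩, hxm, hxf⟩ := hx
    obtain ⟨hnn, hback⟩ := key x hxm hx1
    simp only [Finset.mem_filter, Finset.mem_range]
    constructor
    · -- ((x-a)/m).toNat < n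
      have htn : (((x - a) / m).toNat : ℤ) = (x - a) / m := Int.toNat_of_nonneg hnn
      have h1 : (((x - a) / m).toNat : ℤ) * m < (n:ℤ) * m := by omega
      have := lt_of_mul_lt_mul_right h1 (by positivity : (0:ℤ) ≤ (m:ℤ))
      exact_mod_cast this
    · rw [hback]; exact hxf
  · intro i hi
    show ((a + (i:ℤ) * m - a) / (m:ℤ)).toNat = i
    have h1 : a + (i:ℤ) * m - a = (i:ℤ) * m := by ring
    rw [h1, Int.mul_ediv_cancel _ (by exact_mod_cast hm.ne' : (m:ℤ) ≠ 0)]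
    simp
  · intro x hx
    simp only [Finset.mem_filter, Finset.mem_Icc] at hx
    obtain ⟨⟨hx1, hx2⟩, hxm, hxf⟩ := hx
    show a + (((x - a) / (m:ℤ)).toNat : ℤ) * m = x
    exact (key x hxm hx1).2
  · intro i hi
    rfl

lemma eq_of_mod (m : ℕ) (hm : 0 < m) {x k : ℤ} (hmod : x % m = k % m)
    (h1 : k ≤ x) (h2 : x < k + m) : x = k := by
  have hdvd : (m:ℤ) ∣ (x - k) := by
    have : (x - k) % m = 0 := by
      rw [Int.sub_emod, hmod, sub_self, Int.zero_emod]
    exact Int.dvd_of_emod_eq_zero this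
  obtain ⟨t, ht⟩ := hdvd
  have hmz : (0:ℤ) < (m:ℤ) := by exact_mod_cast hm
  have : t = 0 := by nlinarith
  rw [this, mul_zero] at ht
  omega

lemma exists_d_iff (m : ℕ) (hm : 0 < m) (P Q : Set ℤ) (L U : ℤ)
    (hf0 : ∀ k : ℤ, (k ≤ L ∨ U < k) → fd P Q k = 0) :
    (∃ d : ℤ → ℤ, (Function.support d).Finite ∧
        ∀ k : ℤ, d k - d (k + m) = fd P Q k)
    ↔ ∀ j : Fin m, Ss m P Q L U ((j:ℕ):ℤ) = 0 := by
  have hmz : (0:ℤ) < (m:ℤ) := by exact_mod_cast hm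
  constructor
  · rintro ⟨d, hfin, heq⟩ j
    obtain ⟨Bd, hBd⟩ := hfin.bddAbove
    obtain ⟨Ad, hAd⟩ := hfin.bddBelow
    have hup : ∀ k : ℤ, d k ≠ 0 → k ≤ Bd := fun k hk => hBd hk
    have hlo : ∀ k : ℤ, d k ≠ 0 → Ad ≤ k := fun k hk => hAd hk
    set c := min L (Ad - 1) with hc
    set t := (((j:ℕ):ℤ) - c).toNat with ht
    set a := ((j:ℕ):ℤ) - m * t with ha
    have htz : ((j:ℕ):ℤ) - c ≤ (t:ℤ) := by rw [ht]; exact Int.self_le_toNat _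
    have hmt : (t:ℤ) ≤ (m:ℤ) * t := le_mul_self hm (by positivity)
    have hac : a ≤ c := by rw [ha]; linarith
    have hja : a % m = ((j:ℕ):ℤ) := by
      have : a = ((j:ℕ):ℤ) + (m:ℤ) * (-(t:ℤ)) := by rw [ha]; ring
      rw [this, Int.add_mul_emod_self_left]
      exact Int.emod_eq_of_lt (by positivity) (by exact_mod_cast j.isLt)
    have hda : d a = 0 := by
      by_contra h
      have := hlo a h
      omega
    set n := (max U Bd + 1 - a).toNat with hn
    have hnz : max U Bd + 1 - a ≤ (n:ℤ) := by rw [hn]; exact Int.self_le_toNat _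
    have hmn : (n:ℤ) ≤ (n:ℤ) * m := by
      have := le_mul_self hm (by positivity : (0:ℤ) ≤ (n:ℤ))
      linarith [this]
    have hUn : U < a + n * m := by
      have : U + 1 ≤ a + (n:ℤ) := by omega
      omega
    have hdan : d (a + n * m) = 0 := by
      by_contra h
      have := hup _ h
      omega
    have hsum : ∑ i ∈ Finset.range n, fd P Q (a + i * m) = d a - d (a + n * m) := by
      have hstep : ∀ i : ℕ, fd P Q (a + i * m) = d (a + i * m) - d (a + (i + 1 : ℕ) * m) := by
        intro i
        rw [← heq (a + i * m)]
        congr 1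
        push_cast
        ring
      calc ∑ i ∈ Finset.range n, fd P Q (a + i * m)
          = ∑ i ∈ Finset.range n, (d (a + i * m) - d (a + (i + 1 : ℕ) * m)) :=
            Finset.sum_congr rfl (fun i _ => hstep i)
        _ = d (a + (0:ℕ) * m) - d (a + n * m) := Finset.sum_range_sub' (fun i => d (a + i * m)) n
        _ = d a - d (a + n * m) := by norm_num
    have := sum_window m hm P Q L U hf0 ((j:ℕ):ℤ) a n hja (le_trans hac (min_le_left _ _)) hUn
    rw [← this, hsum, hda, hdan, sub_zero]
  · intro hS
    classical
    refine ⟨fun k => ∑ x ∈ (Finset.Icc (L+1) U).filter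
        (fun x : ℤ => x % (m:ℤ) = k % m ∧ k ≤ x), fd P Q x, ?_, ?_⟩
    · apply Set.Finite.subset (Set.finite_Icc (L+2) U)
      intro k hk
      simp only [Function.mem_support] at hk
      rw [Set.mem_Icc]
      by_contra hout
      push_neg at hout
      apply hk
      rcases le_or_gt k (L+1) with h | h
      · -- sum equals Ss at residue k % m, which is 0
        have hfeq : (Finset.Icc (L+1) U).filter (fun x : ℤ => x % (m:ℤ) = k % m ∧ k ≤ x)
            = (Finset.Icc (L+1) U).filter (fun x : ℤ => x % (m:ℤ) = k % m) := by
          apply Finset.filter_congr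
          intro x hx
          rw [Finset.mem_Icc] at hx
          simp only [and_iff_left_iff_imp]
          intro _
          omega
        have h0 : 0 ≤ k % (m:ℤ) := Int.emod_nonneg k (by omega)
        have h1 : k % (m:ℤ) < m := Int.emod_lt_of_pos k hmz
        have hj : (((⟨(k % (m:ℤ)).toNat, by omega⟩ : Fin m) : ℕ) : ℤ) = k % m := by
          simp [Int.toNat_of_nonneg h0]
        have := hS ⟨(k % (m:ℤ)).toNat, by omega⟩
        rw [hj] at this
        rw [hfeq]
        exact this
      · -- k > U (since k ∉ Icc (L+2) U and k ≥ L+2): filter is empty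
        have hU : U < k := by omega
        rw [Finset.filter_false_of_mem, Finset.sum_empty]
        intro x hx
        rw [Finset.mem_Icc] at hx
        intro hcon
        omega
    · intro k
      have hmod : (k + (m:ℤ)) % m = k % m := by
        rw [show k + (m:ℤ) = k + (m:ℤ) * 1 by ring, Int.add_mul_emod_self_left]
      simp only [hmod]
      set F1 := (Finset.Icc (L+1) U).filter (fun x : ℤ => x % (m:ℤ) = k % m ∧ k ≤ x) with hF1
      set F2 := (Finset.Icc (L+1) U).filter (fun x : ℤ => x % (m:ℤ) = k % m ∧ k + m ≤ x) with hF2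
      have hsub : F2 ⊆ F1 := by
        intro x hx
        rw [hF2, Finset.mem_filter] at hx
        rw [hF1, Finset.mem_filter]
        exact ⟨hx.1, hx.2.1, by have := hx.2.2; omega⟩
      have hsd := Finset.sum_sdiff (f := fd P Q) hsub
      have hdiff : ∑ x ∈ F1, fd P Q x - ∑ x ∈ F2, fd P Q x = ∑ x ∈ F1 \ F2, fd P Q x := by
        omega
      rw [hdiff]
      have hmem : ∀ x : ℤ, x ∈ F1 \ F2 ↔
          ((L+1 ≤ x ∧ x ≤ U) ∧ x % (m:ℤ) = k % m ∧ k ≤ x) ∧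
          ¬((L+1 ≤ x ∧ x ≤ U) ∧ x % (m:ℤ) = k % m ∧ k + m ≤ x) := by
        intro x
        rw [Finset.mem_sdiff, hF1, hF2, Finset.mem_filter, Finset.mem_filter, Finset.mem_Icc]
      rcases Classical.em (L + 1 ≤ k ∧ k ≤ U) with hin | hout
      · have : F1 \ F2 = {k} := by
          ext x
          rw [hmem, Finset.mem_singleton]
          constructor
          · rintro ⟨⟨⟨hx1, hx2⟩, hxm, hxk⟩, hneg⟩
            have hlt : x < k + m := by
              by_contra hge
              exact hneg ⟨⟨hx1, hx2⟩, hxm, by omega⟩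
            exact eq_of_mod m hm hxm hxk hlt
          · rintro rfl
            refine ⟨⟨⟨hin.1, hin.2⟩, rfl, le_refl _⟩, ?_⟩
            rintro ⟨-, -, hcon⟩
            omega
        rw [this, Finset.sum_singleton]
      · have : F1 \ F2 = ∅ := by
          rw [Finset.eq_empty_iff_forall_notMem]
          intro x hx
          rw [hmem] at hx
          obtain ⟨⟨⟨hx1, hx2⟩, hxm, hxk⟩, hneg⟩ := hx
          have hlt : x < k + m := by
            by_contra hge
            exact hneg ⟨⟨hx1, hx2⟩, hxm, by omega⟩
          have := eq_of_mod m hm hxm hxk hlt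
          omega
        rw [this, Finset.sum_empty]
        exact (hf0 k (by omega)).symm

lemma mem_runner (m : ℕ) (hm : 0 < m) (β : Set ℤ) (j : Fin m) (q : ℤ) :
    q ∈ abacusRunner m j β ↔ (m:ℤ) * q + ((j:ℕ):ℤ) ∈ β := by
  have hmz : (0:ℤ) < (m:ℤ) := by exact_mod_cast hm
  have hj0 : (0:ℤ) ≤ ((j:ℕ):ℤ) := by positivity
  have hjm : ((j:ℕ):ℤ) < (m:ℤ) := by exact_mod_cast j.isLt
  constructor
  · rintro ⟨x, hx, hmod, hdiv⟩
    have : x = (m:ℤ) * q + ((j:ℕ):ℤ) := by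
      conv_lhs => rw [← Int.mul_ediv_add_emod x m]
      rw [hmod, hdiv]
    rwa [← this]
  · intro h
    refine ⟨(m:ℤ) * q + ((j:ℕ):ℤ), h, ?_, ?_⟩
    · rw [add_comm, Int.add_mul_emod_self_left]
      exact Int.emod_eq_of_lt hj0 hjm
    · rw [add_comm, Int.add_mul_ediv_left _ _ hmz.ne',
        Int.ediv_eq_zero_of_lt hj0 hjm, zero_add]

lemma count_iff (m : ℕ) (hm : 0 < m) (P Q : Set ℤ) (L U : ℤ)
    (hPhi : ∀ k ∈ P, k ≤ U) (hQhi : ∀ k ∈ Q, k ≤ U)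
    (hf0 : ∀ k : ℤ, (k ≤ L ∨ U < k) → fd P Q k = 0)
    (j : Fin m) :
    (∃ N0 : ℤ, ∀ N : ℤ, N ≤ N0 →
        (abacusRunner m j P ∩ Set.Ici N).ncard = (abacusRunner m j Q ∩ Set.Ici N).ncard)
    ↔ Ss m P Q L U ((j:ℕ):ℤ) = 0 := by
  classical
  have hmz : (0:ℤ) < (m:ℤ) := by exact_mod_cast hm
  have hj0 : (0:ℤ) ≤ ((j:ℕ):ℤ) := by positivity
  have hjm : ((j:ℕ):ℤ) < (m:ℤ) := by exact_mod_cast j.isLt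
  set Uq : ℤ := |U| with hUq
  set Lq : ℤ := -(|L| + m) with hLq
  have hLq0 : Lq ≤ 0 := by rw [hLq]; have := abs_nonneg L; omega
  have hUq0 : 0 ≤ Uq := abs_nonneg U
  -- runner elements are bounded above by Uq
  have hub : ∀ (β : Set ℤ), (∀ k ∈ β, k ≤ U) → ∀ q ∈ abacusRunner m j β, q ≤ Uq := by
    intro β hβ q hq
    rw [mem_runner m hm] at hq
    have h1 := hβ _ hq
    by_contra hc
    push_neg at hc
    have hq0 : 0 ≤ q := by omega
    have := le_mul_self hm hq0
    have := abs_nonneg U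
    have : U ≤ |U| := le_abs_self U
    omega
  -- the sets as finsets
  have hset : ∀ (β : Set ℤ), (∀ k ∈ β, k ≤ U) → ∀ N : ℤ,
      (abacusRunner m j β ∩ Set.Ici N) =
        ↑((Finset.Icc N Uq).filter (fun q => q ∈ abacusRunner m j β)) := by
    intro β hβ N
    ext q
    simp only [Set.mem_inter_iff, Set.mem_Ici, Finset.coe_filter, Set.mem_setOf_eq,
      Finset.mem_Icc]
    constructor
    · rintro ⟨h1, h2⟩
      exact ⟨⟨h2, hub β hβ q h1⟩, h1⟩
    · rintro ⟨⟨h1, _⟩, h2⟩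
      exact ⟨h2, h1⟩
  -- main claim: for all N ≤ Lq the signed difference of counts is Ss
  have claim : ∀ N : ℤ, N ≤ Lq →
      ((abacusRunner m j P ∩ Set.Ici N).ncard : ℤ)
        - ((abacusRunner m j Q ∩ Set.Ici N).ncard : ℤ) = Ss m P Q L U ((j:ℕ):ℤ) := by
    intro N hN
    rw [hset P hPhi N, hset Q hQhi N, Set.ncard_coe_finset, Set.ncard_coe_finset]
    rw [← Finset.sum_boole (fun q => q ∈ abacusRunner m j P) (Finset.Icc N Uq),
        ← Finset.sum_boole (fun q => q ∈ abacusRunner m j Q) (Finset.Icc N Uq),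
        ← Finset.sum_sub_distrib]
    have hcongr : ∀ q ∈ Finset.Icc N Uq,
        ((if q ∈ abacusRunner m j P then (1:ℤ) else 0)
          - (if q ∈ abacusRunner m j Q then (1:ℤ) else 0))
        = fd P Q ((m:ℤ) * q + ((j:ℕ):ℤ)) := by
      intro q _
      rw [fd]
      congr 1 <;> [skip; skip] <;>
        · congr 1
          · exact propext (mem_runner m hm _ j q)
    rw [Finset.sum_congr rfl hcongr]
    -- reindex over range n
    set n : ℕ := (Uq - N + 1).toNat with hn
    have hnz : (n:ℤ) = Uq - N + 1 := by
      rw [hn]; rw [Int.toNat_of_nonneg (by omega)]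
    have hmap : Finset.Icc N Uq =
        (Finset.range n).map ⟨fun i : ℕ => N + (i:ℤ), show Function.Injective (fun i : ℕ => N + (i:ℤ)) by intro a b hab; simpa using hab⟩ := by
      ext q
      simp only [Finset.mem_Icc, Finset.mem_map, Finset.mem_range, Function.Embedding.coeFn_mk]
      constructor
      · rintro ⟨h1, h2⟩
        refine ⟨(q - N).toNat, ?_, ?_⟩
        · have : ((q - N).toNat : ℤ) = q - N := Int.toNat_of_nonneg (by omega)
          omega
        · have : ((q - N).toNat : ℤ) = q - N := Int.toNat_of_nonneg (by omega)
          omega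
      · rintro ⟨i, hi, rfl⟩
        have : (i:ℤ) < (n:ℤ) := by exact_mod_cast hi
        omega
    rw [hmap, Finset.sum_map]
    simp only [Function.Embedding.coeFn_mk]
    have harg : ∀ i : ℕ, (m:ℤ) * (N + (i:ℤ)) + ((j:ℕ):ℤ)
        = ((m:ℤ) * N + ((j:ℕ):ℤ)) + (i:ℤ) * m := by intro i; ring
    rw [Finset.sum_congr rfl (fun i _ => by rw [harg i])]
    -- apply the window lemma
    apply sum_window m hm P Q L U hf0 ((j:ℕ):ℤ) ((m:ℤ) * N + ((j:ℕ):ℤ)) n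
    · rw [add_comm, Int.add_mul_emod_self_left]
      exact Int.emod_eq_of_lt hj0 hjm
    · -- m*N + j ≤ L
      have hN' : N ≤ -(|L| + (m:ℤ)) := by rw [← hLq]; exact hN
      have h1 : (m:ℤ) * N ≤ (m:ℤ) * (-(|L| + (m:ℤ))) :=
        mul_le_mul_of_nonneg_left hN' (by positivity)
      have h2 : (m:ℤ) * (-(|L| + (m:ℤ))) ≤ -(|L| + (m:ℤ)) :=
        mul_self_le hm (by have := abs_nonneg L; omega)
      have h3 : -|L| ≤ L := neg_abs_le L
      omega
    · -- U < m*N + j + n*m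
      have h1 : (m:ℤ) * N + ((j:ℕ):ℤ) + (n:ℤ) * m = (m:ℤ) * (Uq + 1) + ((j:ℕ):ℤ) := by
        rw [hnz]; ring
      have h2 : Uq + 1 ≤ (m:ℤ) * (Uq + 1) := le_mul_self hm (by omega)
      have h3 : U ≤ |U| := le_abs_self U
      rw [h1]
      omega
  constructor
  · rintro ⟨N0, hN0⟩
    have h1 := claim (min N0 Lq) (min_le_right _ _)
    rw [hN0 _ (min_le_left _ _)] at h1
    omega
  · intro hS
    refine ⟨Lq, fun N hN => ?_⟩
    have h1 := claim N hN
    rw [hS] at h1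
    omega

end Stmt12Aux

section BetaBounds

lemma beta_low (σ : PartitionSeq) (s : ℤ) (Nσ : ℕ) (hNσ : ∀ i : ℕ, Nσ ≤ i → σ.1 i = 0)
    (k : ℤ) (hk : k ≤ s - 1 - Nσ) : k ∈ betaSet σ s := by
  refine ⟨(s - 1 - k).toNat, ?_⟩
  have h1 : (((s - 1 - k).toNat : ℕ) : ℤ) = s - 1 - k := Int.toNat_of_nonneg (by omega)
  have h2 : σ.1 (s - 1 - k).toNat = 0 := hNσ _ (by omega)
  simp only [h2, Nat.cast_zero]
  omega

lemma beta_high (σ : PartitionSeq) (s : ℤ) (k : ℤ) (hk : k ∈ betaSet σ s) :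
    k ≤ (σ.1 0 : ℤ) + s - 1 := by
  obtain ⟨i, rfl⟩ := hk
  show ((σ.1 i : ℕ) : ℤ) - ((i : ℤ) + 1) + s ≤ (σ.1 0 : ℤ) + s - 1
  have h1 : σ.1 i ≤ σ.1 0 := σ.2.1 0 i (Nat.zero_le i)
  have h2 : ((σ.1 i : ℕ) : ℤ) ≤ ((σ.1 0 : ℕ) : ℤ) := by exact_mod_cast h1
  have h3 : (0:ℤ) ≤ (i:ℤ) := by positivity
  omega

end BetaBounds

open Classical in
/-- for `m > 0`, `s ∈ ℤ`, and partitions `π, ρ` of the same size,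
`π` and `ρ` have the same `m`-core (equivalently: for each runner, the bead counts
`≥ N` agree for all sufficiently negative `N`) if and only if `1 − t^{−m}` divides
`Z(t, β_{π,s}) − Z(t, β_{ρ,s})`, i.e. the coefficientwise difference is of the form
`d(k) − d(k + m)` for some finitely supported `d : ℤ → ℤ`. -/
theorem stmt_12 (m : ℕ) (hm : 0 < m) (s : ℤ) (π ρ : PartitionSeq)
    (hsize : psize π = psize ρ) :
    (∀ j : Fin m, ∃ N0 : ℤ, ∀ N : ℤ, N ≤ N0 →
        (abacusRunner m j (betaSet π s) ∩ Set.Ici N).ncard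
          = (abacusRunner m j (betaSet ρ s) ∩ Set.Ici N).ncard)
    ↔ ∃ d : ℤ → ℤ, (Function.support d).Finite ∧
        ∀ k : ℤ, d k - d (k + m)
          = (if k ∈ betaSet π s then (1 : ℤ) else 0)
            - (if k ∈ betaSet ρ s then (1 : ℤ) else 0) := by
  obtain ⟨Nπ, hNπ⟩ := π.2.2
  obtain ⟨Nρ, hNρ⟩ := ρ.2.2
  set L : ℤ := s - 1 - (max Nπ Nρ : ℕ) with hL
  set U : ℤ := ((max (π.1 0) (ρ.1 0) : ℕ) : ℤ) + s - 1 with hU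
  have hcastN : ((Nπ:ℤ) ≤ ((max Nπ Nρ : ℕ) : ℤ)) ∧ ((Nρ:ℤ) ≤ ((max Nπ Nρ : ℕ) : ℤ)) :=
    ⟨by exact_mod_cast le_max_left Nπ Nρ, by exact_mod_cast le_max_right Nπ Nρ⟩
  have hcastP : ((π.1 0 : ℤ) ≤ ((max (π.1 0) (ρ.1 0) : ℕ) : ℤ)) ∧
      ((ρ.1 0 : ℤ) ≤ ((max (π.1 0) (ρ.1 0) : ℕ) : ℤ)) :=
    ⟨by exact_mod_cast le_max_left _ _, by exact_mod_cast le_max_right _ _⟩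
  have hloπ : ∀ k : ℤ, k ≤ L → k ∈ betaSet π s :=
    fun k hk => beta_low π s Nπ hNπ k (by omega)
  have hloρ : ∀ k : ℤ, k ≤ L → k ∈ betaSet ρ s :=
    fun k hk => beta_low ρ s Nρ hNρ k (by omega)
  have hhiπ : ∀ k ∈ betaSet π s, k ≤ U :=
    fun k hk => by have := beta_high π s k hk; omega
  have hhiρ : ∀ k ∈ betaSet ρ s, k ≤ U :=
    fun k hk => by have := beta_high ρ s k hk; omega
  have hf0 : ∀ k : ℤ, (k ≤ L ∨ U < k) → Stmt12Aux.fd (betaSet π s) (betaSet ρ s) k = 0 := by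
    intro k hk
    rw [Stmt12Aux.fd]
    rcases hk with hk | hk
    · rw [if_pos (hloπ k hk), if_pos (hloρ k hk), sub_self]
    · rw [if_neg (fun h => absurd (hhiπ k h) (by omega)),
        if_neg (fun h => absurd (hhiρ k h) (by omega)), sub_self]
  have h1 : ∀ j : Fin m,
      (∃ N0 : ℤ, ∀ N : ℤ, N ≤ N0 →
        (abacusRunner m j (betaSet π s) ∩ Set.Ici N).ncard
          = (abacusRunner m j (betaSet ρ s) ∩ Set.Ici N).ncard)
      ↔ Stmt12Aux.Ss m (betaSet π s) (betaSet ρ s) L U ((j:ℕ):ℤ) = 0 :=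
    fun j => Stmt12Aux.count_iff m hm (betaSet π s) (betaSet ρ s) L U hhiπ hhiρ hf0 j
  have h2 : (∃ d : ℤ → ℤ, (Function.support d).Finite ∧
        ∀ k : ℤ, d k - d (k + m) = Stmt12Aux.fd (betaSet π s) (betaSet ρ s) k)
      ↔ ∀ j : Fin m, Stmt12Aux.Ss m (betaSet π s) (betaSet ρ s) L U ((j:ℕ):ℤ) = 0 :=
    Stmt12Aux.exists_d_iff m hm (betaSet π s) (betaSet ρ s) L U hf0
  constructor
  · intro hLft
    exact h2.mpr (fun j => (h1 j).mp (hLft j))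
  · intro hR j
    exact (h1 j).mpr (h2.mp hR j)
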